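/- Let a < b, let f : ℝ → ℝ → ℝ be continuous and satisfy |f(t,u₁) − f(t,u₂)| ≤ L|u₁ − u₂| for all t ∈ [a,b] and u₁,u₂ ∈ ℝ, and let u : [a,b] → ℝ be continuously differentiable with u'(t) = f(t,u(t)) on [a,b]. Fix reals b₁,…,b₄, c₂, c₃, c₄ and a_{ij} (1 ≤ j < i ≤ 4) with b₁+b₂+b₃+b₄ = 1, a₂₁ = c₂, a₃₁+a₃₂ = c₃, a₄₁+a₄₂+a₄₃ = c₄, and satisfying the fourth-order conditions b₂c₂+b₃c₃+b₄c₄ = 1/2, b₂c₂²+b₃c₃²+b₄c₄² = 1/3, b₂c₂³+b₃c₃³+b₄c₄³ = 1/4, a₃₂b₃c₂+a₄₂b₄c₂+a₄₃b₄c₃ = 1/6, a₃₂b₃c₂c₃+a₄₂b₄c₂c₄+a₄₃b₄c₃c₄ = 1/8, a₃₂b₃c₂²+a₄₂b₄c₂²+a₄₃b₄c₃² = 1/12, a₃₂a₄₃b₄c₂ = 1/24, and fix M ≥ 0. For each N ≥ 1 set h = (b−a)/N, t_n = a + nh, choose shape parameters e_{n,2}, e_{n,3}, e_{n,4} ∈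 ℝ all bounded in absolute value by M, and define v₀ = u(a) and v_{n+1} = v_n + h(b₁k₁ + b₂k₂ + b₃k₃ + b₄k₄), where k₁ = f(t_n, v_n), k₂ = f(t_n + c₂h, v_n·exp(−e_{n,2}(c₂h)²) + h a₂₁ k₁), k₃ = f(t_n + c₃h, v_n·exp(−e_{n,3}(c₃h)²) + h(a₃₁k₁ + a₃₂k₂)), k₄ = f(t_n + c₄h, v_n·exp(−e_{n,4}(c₄h)²) + h(a₄₁k₁ + a₄₂k₂ + a₄₃k₃)). Then max_{0 ≤ n ≤ N} |v_n − u(t_n)| → 0 as N → ∞ (uniformly over all admissible choices of the shape parameters). -/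

import Mathlib

/-! Since `b₁ + b₂ + b₃ + b₄ = 1`, the method is consistent: each stage value differs from
`f tₙ (u tₙ)` by at most `L |vₙ - u tₙ|` plus a quantity that tends to `0` with `h`, uniformly in
the shape parameters, because `exp (-e (c h)²) = 1 + O(h²)` for bounded `e`. Comparing with
`u (tₙ + h) = u tₙ + h f tₙ (u tₙ) + o(h)` gives `eₙ₊₁ ≤ (1 + h Λ) eₙ + h τ(h)` with `τ(h) → 0`, and
the discrete Grönwall inequality bounds every error by `(b - a) e^{Λ (b - a)} τ(h)`. The stage
estimates need `vₙ` to stay in a fixed compact set, which is secured by a bootstrap: the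
Grönwall bound itself keeps every error below `1`. -/

open Set Filter Topology Real

theorem abs_sum_mul_le {ι : Type*} (s : Finset ι) (w x : ι → ℝ) {K : ℝ}
    (hx : ∀ i ∈ s, |x i| ≤ K) : |∑ i ∈ s, w i * x i| ≤ (∑ i ∈ s, |w i|) * K := by
  rw [Finset.sum_mul]
  refine (Finset.abs_sum_le_sum_abs _ _).trans (Finset.sum_le_sum fun i hi => ?_)
  rw [abs_mul]
  exact mul_le_mul_of_nonneg_left (hx i hi) (abs_nonneg _)

theorem abs_sub_sub_mul_le_of_hasDerivAt {u φ : ℝ → ℝ} {t₁ t₂ c ε : ℝ} (h12 : t₁ ≤ t₂)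
    (hd : ∀ x ∈ Icc t₁ t₂, HasDerivAt u (φ x) x) (hb : ∀ x ∈ Icc t₁ t₂, |φ x - c| ≤ ε) :
    |u t₂ - u t₁ - (t₂ - t₁) * c| ≤ ε * (t₂ - t₁) := by
  have := norm_image_sub_le_of_norm_deriv_le_segment' (f := fun x => u x - x * c)
    (fun x hx => (((hd x hx).sub ((hasDerivAt_id x).mul_const c)).hasDerivWithinAt).congr_deriv
      (by simp)) (fun x hx => hb x (Ico_subset_Icc_self hx)) t₂ (right_mem_Icc.2 h12)
  rw [Real.norm_eq_abs] at this
  convert this using 2; ring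

theorem tendsto_const_div_natCast_nhdsGT {c : ℝ} (hc : 0 < c) :
    Tendsto (fun N : ℕ => c / N) atTop (𝓝[>] 0) :=
  tendsto_nhdsWithin_iff.2 ⟨tendsto_const_div_atTop_nhds_zero_nat c,
    eventually_atTop.2 ⟨1, fun _ hN => div_pos hc (by exact_mod_cast hN)⟩⟩

theorem discrete_gronwall_bootstrap {d : ℕ → ℝ} {N : ℕ} {h Λ τ T : ℝ} (hh : 0 ≤ h) (hΛ : 0 ≤ Λ)
    (hτ : 0 ≤ τ) (hNT : N * h ≤ T) (h0 : d 0 ≤ 0)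
    (hstep : ∀ n < N, d n ≤ T * exp (Λ * T) * τ → d (n + 1) ≤ (1 + h * Λ) * d n + h * τ) :
    ∀ n ≤ N, d n ≤ T * exp (Λ * T) * τ := by
  -- Since `1 + h Λ ≤ exp (h Λ)`, `g` is a supersolution of the recursion.
  set g : ℕ → ℝ := fun n => n * h * exp (Λ * (n * h)) * τ
  have hg_le : ∀ n ≤ N, g n ≤ T * exp (Λ * T) * τ := fun n hn => by
    have : n * h ≤ T := le_trans (by gcongr) hNT
    have : 0 ≤ n * h := by positivity
    simp only [g]; gcongr; linarith
  have hg_succ : ∀ n, (1 + h * Λ) * g n + h * τ ≤ g (n + 1) := fun n => by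
    have e₁ := add_one_le_exp (h * Λ)
    have e₂ : exp (Λ * ((n + 1 : ℕ) * h)) = exp (Λ * (n * h)) * exp (h * Λ) := by
      rw [← exp_add]; push_cast; ring_nf
    have e₃ : 1 ≤ exp (Λ * ((n + 1 : ℕ) * h)) := one_le_exp (by positivity)
    simp only [g]; rw [e₂] at e₃ ⊢
    have : 0 ≤ n * h * exp (Λ * (n * h)) * τ := by positivity
    push_cast
    nlinarith [mul_le_mul_of_nonneg_right e₁ this, mul_le_mul_of_nonneg_left e₃ (mul_nonneg hh hτ)]
  have hdg : ∀ n ≤ N, d n ≤ g n := by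
    intro n
    induction n with
    | zero => intro; simpa [g] using h0
    | succ n ih =>
      intro hn
      have hd := ih (by omega)
      calc d (n + 1) ≤ (1 + h * Λ) * d n + h * τ := hstep n hn (hd.trans (hg_le n (by omega)))
        _ ≤ (1 + h * Λ) * g n + h * τ := by gcongr
        _ ≤ g (n + 1) := hg_succ n
  exact fun n hn => (hdg n hn).trans (hg_le n hn)

theorem eventually_nhdsGT_lt_of_continuousAt {g : ℝ → ℝ} (hg : ContinuousAt g 0) (h0 : g 0 = 0)
    {ε : ℝ} (hε : 0 < ε) : ∀ᶠ h in 𝓝[>] 0, g h < ε :=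
  nhdsWithin_le_nhds (hg.eventually_lt continuousAt_const (by rwa [h0]))

section
variable {f : ℝ → ℝ → ℝ} {a b L : ℝ}

theorem nonneg_of_abs_sub_le_mul (hab : a ≤ b)
    (hlip : ∀ t ∈ Icc a b, ∀ u₁ u₂ : ℝ, |f t u₁ - f t u₂| ≤ L * |u₁ - u₂|) : 0 ≤ L := by
  simpa using (abs_nonneg _).trans (hlip a (left_mem_Icc.2 hab) 1 0)

theorem exists_abs_sub_le_mul_abs_sub_add (hab : a ≤ b)
    (hfc : Continuous (fun p : ℝ × ℝ => f p.1 p.2))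
    (hlip : ∀ t ∈ Icc a b, ∀ u₁ u₂ : ℝ, |f t u₁ - f t u₂| ≤ L * |u₁ - u₂|)
    (ρ : ℝ) {η : ℝ} (hη : 0 < η) :
    ∃ δ > 0, ∀ t ∈ Icc a b, ∀ s w y : ℝ, |s - t| ≤ δ → |w| ≤ ρ → |y| ≤ ρ →
      |f s w - f t y| ≤ L * |w - y| + η := by
  have hK : IsCompact (Icc (a - 1) (b + 1) ×ˢ Icc (-ρ) ρ) := isCompact_Icc.prod isCompact_Icc
  obtain ⟨δ, hδ, hfδ⟩ := Metric.uniformContinuousOn_iff_le.1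
    (hK.uniformContinuousOn_of_continuous hfc.continuousOn) (η / 2) (half_pos hη)
  refine ⟨min 1 (δ / 2), by positivity, fun t ht s w y hs hw hy => ?_⟩
  -- `f` is Lipschitz in its second argument only over `[a, b]`: pass through the projection of `s`.
  set p : ℝ := (projIcc a b hab s : ℝ)
  have hp : p ∈ Icc a b := Subtype.prop _
  have hpt : |p - t| ≤ |s - t| := by
    simpa [projIcc_of_mem hab ht] using abs_projIcc_sub_projIcc hab (c := s) (d := t)
  have hs₁ := hs.trans (min_le_left _ _)
  have hs₂ := hs.trans (min_le_right _ _)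
  have near : ∀ {x}, x ∈ Icc a b ∨ |x - t| ≤ 1 → x ∈ Icc (a - 1) (b + 1) := by
    rintro x (hx | hx)
    · exact ⟨by linarith [hx.1], by linarith [hx.2]⟩
    · rw [abs_le] at hx; exact ⟨by linarith [ht.1, hx.1], by linarith [ht.2, hx.2]⟩
  have mem : ∀ {x z}, x ∈ Icc a b ∨ |x - t| ≤ 1 → |z| ≤ ρ →
      (x, z) ∈ Icc (a - 1) (b + 1) ×ˢ Icc (-ρ) ρ :=
    fun hx hz => ⟨near hx, abs_le.1 hz⟩
  have h₁ : |f s w - f p w| ≤ η / 2 := by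
    simpa [Real.dist_eq] using hfδ (s, w) (mem (.inr hs₁) hw) (p, w) (mem (.inl hp) hw)
      (by simp [Prod.dist_eq, Real.dist_eq]; linarith [abs_sub_le s t p, abs_sub_comm t p])
  have h₂ : |f p y - f t y| ≤ η / 2 := by
    simpa [Real.dist_eq] using hfδ (p, y) (mem (.inl hp) hy) (t, y) (mem (.inl ht) hy)
      (by simp [Prod.dist_eq, Real.dist_eq]; linarith)
  calc |f s w - f t y| ≤ |f s w - f p w| + |f p w - f p y| + |f p y - f t y| :=
        by linarith [abs_sub_le (f s w) (f p w) (f t y), abs_sub_le (f p w) (f p y) (f t y)]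
    _ ≤ η / 2 + L * |w - y| + η / 2 := by gcongr; exact hlip p hp w y
    _ = L * |w - y| + η := by ring

theorem eventually_abs_stage_sub_le (hab : a ≤ b)
    (hfc : Continuous (fun p : ℝ × ℝ => f p.1 p.2))
    (hlip : ∀ t ∈ Icc a b, ∀ u₁ u₂ : ℝ, |f t u₁ - f t u₂| ≤ L * |u₁ - u₂|)
    (U c M B : ℝ) {η : ℝ} (hη : 0 < η) :
    ∀ᶠ h in 𝓝[>] 0, ∀ t ∈ Icc a b, ∀ y v e S : ℝ, |y| ≤ U → |v - y| ≤ 1 → |e| ≤ M → |S| ≤ B →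
      |f (t + c * h) (v * exp (-e * (c * h) ^ 2) + h * S) - f t y| ≤ L * |v - y| + η := by
  have hL := nonneg_of_abs_sub_le_mul hab hlip
  obtain ⟨δ, hδ, hfδ⟩ := exists_abs_sub_le_mul_abs_sub_add hab hfc hlip (U + 2) (half_pos hη)
  set r := min 1 (η / (2 * (L + 1)))
  have hr : L * r ≤ η / 2 := calc
    L * r ≤ (L + 1) * (η / (2 * (L + 1))) :=
      mul_le_mul (by linarith) (min_le_right _ _) (by positivity) (by linarith)
    _ = η / 2 := by field_simp
  filter_upwards [self_mem_nhdsWithin,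
    eventually_nhdsGT_lt_of_continuousAt (g := fun h => |c| * h) (by fun_prop) (by simp) hδ,
    eventually_nhdsGT_lt_of_continuousAt (g := fun h => M * (c * h) ^ 2) (by fun_prop) (by simp)
      one_pos,
    eventually_nhdsGT_lt_of_continuousAt (g := fun h => (U + 1) * (2 * (M * (c * h) ^ 2)) + h * B)
      (by fun_prop) (by simp) (by positivity : 0 < r)]
    with h (hh : 0 < h) hcδ hx₁ hr₁
  intro t ht y v e S hy hvy he hS
  set x := -e * (c * h) ^ 2
  have hx : |x| ≤ M * (c * h) ^ 2 := by
    rw [abs_mul, abs_neg, abs_of_nonneg (sq_nonneg (c * h))]; gcongr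
  have hv : |v| ≤ U + 1 := by linarith [abs_sub_abs_le_abs_sub v y]
  have hw : |v * exp x + h * S - v| ≤ r := calc
    |v * exp x + h * S - v| = |v * (exp x - 1) + h * S| := by ring_nf
    _ ≤ |v * (exp x - 1)| + |h * S| := abs_add_le _ _
    _ = |v| * |exp x - 1| + h * |S| := by rw [abs_mul, abs_mul, abs_of_pos hh]
    _ ≤ (U + 1) * (2 * (M * (c * h) ^ 2)) + h * B := by
      gcongr
      · linarith [abs_nonneg v]
      · exact (abs_exp_sub_one_le (hx.trans hx₁.le)).trans (by linarith)
    _ ≤ r := hr₁.le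
  have hwy : |v * exp x + h * S - y| ≤ |v - y| + r := by
    linarith [abs_sub_le (v * exp x + h * S) v y]
  calc |f (t + c * h) (v * exp x + h * S) - f t y|
      ≤ L * |v * exp x + h * S - y| + η / 2 := by
        refine hfδ t ht _ _ y ?_ ?_ (by linarith)
        · rw [add_sub_cancel_left, abs_mul, abs_of_pos hh]; exact hcδ.le
        · linarith [abs_sub_abs_le_abs_sub (v * exp x + h * S) y, min_le_left 1 (η / (2 * (L + 1)))]
    _ ≤ L * (|v - y| + r) + η / 2 := by gcongr
    _ ≤ L * |v - y| + η := by linarith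

variable {u : ℝ → ℝ}

theorem eventually_abs_sub_sub_mul_le (hfc : Continuous (fun p : ℝ × ℝ => f p.1 p.2))
    (hu : ∀ t ∈ Icc a b, HasDerivAt u (f t (u t)) t) {τ : ℝ} (hτ : 0 < τ) :
    ∀ᶠ h in 𝓝[>] 0, ∀ t ∈ Icc a b, t + h ≤ b →
      |u (t + h) - u t - h * f t (u t)| ≤ τ * h := by
  have hφ : ContinuousOn (fun t => f t (u t)) (Icc a b) :=
    hfc.comp_continuousOn (continuousOn_id.prodMk fun t ht =>
      (hu t ht).continuousAt.continuousWithinAt)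
  obtain ⟨δ, hδ, hφδ⟩ := Metric.uniformContinuousOn_iff_le.1
    (isCompact_Icc.uniformContinuousOn_of_continuous hφ) τ hτ
  filter_upwards [self_mem_nhdsWithin, nhdsWithin_le_nhds (Iio_mem_nhds hδ)]
    with h (hh : 0 < h) (hhδ : h < δ)
  intro t ht hth
  have hsub : Icc t (t + h) ⊆ Icc a b := Icc_subset_Icc ht.1 hth
  have := abs_sub_sub_mul_le_of_hasDerivAt (le_add_of_nonneg_right hh.le)
    (fun x hx => hu x (hsub hx)) (c := f t (u t)) (ε := τ) fun x hx => by
      simpa [Real.dist_eq] using hφδ x (hsub hx) t ht (by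
        rw [Real.dist_eq, abs_of_nonneg (by linarith [hx.1])]; linarith [hx.2])
  simpa using this

theorem eventually_abs_rbf_rk_step_sub_le (hab : a ≤ b)
    (hfc : Continuous (fun p : ℝ × ℝ => f p.1 p.2))
    (hlip : ∀ t ∈ Icc a b, ∀ u₁ u₂ : ℝ, |f t u₁ - f t u₂| ≤ L * |u₁ - u₂|)
    (hu : ∀ t ∈ Icc a b, HasDerivAt u (f t (u t)) t)
    {b₁ b₂ b₃ b₄ : ℝ} (c₂ c₃ c₄ a₂₁ a₃₁ a₃₂ a₄₁ a₄₂ a₄₃ M : ℝ)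
    (hb : b₁ + b₂ + b₃ + b₄ = 1) {τ : ℝ} (hτ : 0 < τ) :
    ∀ᶠ h in 𝓝[>] 0, ∀ t ∈ Icc a b, t + h ≤ b →
      ∀ v e₂ e₃ e₄ k₁ k₂ k₃ k₄ : ℝ, |v - u t| ≤ 1 → |e₂| ≤ M → |e₃| ≤ M → |e₄| ≤ M →
      k₁ = f t v →
      k₂ = f (t + c₂ * h) (v * exp (-e₂ * (c₂ * h) ^ 2) + h * (a₂₁ * k₁)) →
      k₃ = f (t + c₃ * h) (v * exp (-e₃ * (c₃ * h) ^ 2) + h * (a₃₁ * k₁ + a₃₂ * k₂)) →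
      k₄ = f (t + c₄ * h)
        (v * exp (-e₄ * (c₄ * h) ^ 2) + h * (a₄₁ * k₁ + a₄₂ * k₂ + a₄₃ * k₃)) →
      |v + h * (b₁ * k₁ + b₂ * k₂ + b₃ * k₃ + b₄ * k₄) - u (t + h)|
        ≤ (1 + h * ((|b₁| + |b₂| + |b₃| + |b₄|) * L)) * |v - u t| + h * τ := by
  have hL := nonneg_of_abs_sub_le_mul hab hlip
  have hucont : ContinuousOn u (Icc a b) := fun t ht => (hu t ht).continuousAt.continuousWithinAt
  obtain ⟨U, hU⟩ := isCompact_Icc.exists_bound_of_continuousOn hucont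
  obtain ⟨G, hG⟩ := isCompact_Icc.exists_bound_of_continuousOn
    (hfc.comp_continuousOn (continuousOn_id.prodMk hucont))
  set β := |b₁| + |b₂| + |b₃| + |b₄|
  set η := min 1 (τ / (2 * (β + 1)))
  have hη : 0 < η := by positivity
  have hβ : 0 < β + 1 := by positivity
  have hβη : β * η ≤ τ / 2 := calc
    β * η ≤ (β + 1) * (τ / (2 * (β + 1))) :=
      mul_le_mul (by linarith) (min_le_right _ _) hη.le (by positivity)
    _ = τ / 2 := by field_simp
  set K := G + L + 1
  filter_upwards [
    eventually_abs_stage_sub_le hab hfc hlip U c₂ M (|a₂₁| * K) hη,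
    eventually_abs_stage_sub_le hab hfc hlip U c₃ M ((|a₃₁| + |a₃₂|) * K) hη,
    eventually_abs_stage_sub_le hab hfc hlip U c₄ M ((|a₄₁| + |a₄₂| + |a₄₃|) * K) hη,
    eventually_abs_sub_sub_mul_le hfc hu (half_pos hτ), self_mem_nhdsWithin]
    with h stage₂ stage₃ stage₄ hcons (hh : 0 < h)
  intro t ht hth v e₂ e₃ e₄ k₁ k₂ k₃ k₄ hv he₂ he₃ he₄ hk₁ hk₂ hk₃ hk₄
  set F := f t (u t)
  have hy : |u t| ≤ U := by simpa using hU t ht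
  have hF : |F| ≤ G := by simpa using hG t ht
  have hd : L * |v - u t| + η ≤ L + 1 := by
    nlinarith [min_le_left 1 (τ / (2 * (β + 1)))]
  have bound : ∀ k, |k - F| ≤ L * |v - u t| + η → |k| ≤ K := fun k hk => by
    linarith [abs_sub_abs_le_abs_sub k F]
  have d₁ : |k₁ - F| ≤ L * |v - u t| + η := by
    rw [hk₁]; linarith [hlip t ht v (u t)]
  have d₂ : |k₂ - F| ≤ L * |v - u t| + η := hk₂ ▸ stage₂ t ht (u t) v e₂ _ hy hv he₂ (by
    rw [abs_mul]; exact mul_le_mul_of_nonneg_left (bound _ d₁) (abs_nonneg _))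
  have d₃ : |k₃ - F| ≤ L * |v - u t| + η := hk₃ ▸ stage₃ t ht (u t) v e₃ _ hy hv he₃ (by
    simpa [Fin.sum_univ_two] using abs_sum_mul_le Finset.univ ![a₃₁, a₃₂] ![k₁, k₂]
      (by simp [Fin.forall_fin_succ, bound _ d₁, bound _ d₂]))
  have d₄ : |k₄ - F| ≤ L * |v - u t| + η := hk₄ ▸ stage₄ t ht (u t) v e₄ _ hy hv he₄ (by
    simpa [Fin.sum_univ_three, add_assoc] using abs_sum_mul_le Finset.univ ![a₄₁, a₄₂, a₄₃]
      ![k₁, k₂, k₃] (by simp [Fin.forall_fin_succ, bound _ d₁, bound _ d₂, bound _ d₃]))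
  have hΦ : |b₁ * k₁ + b₂ * k₂ + b₃ * k₃ + b₄ * k₄ - F| ≤ β * (L * |v - u t| + η) := by
    rw [show b₁ * k₁ + b₂ * k₂ + b₃ * k₃ + b₄ * k₄ - F
        = b₁ * (k₁ - F) + b₂ * (k₂ - F) + b₃ * (k₃ - F) + b₄ * (k₄ - F) by
      linear_combination F * hb]
    simpa [Fin.sum_univ_four, β, add_assoc] using abs_sum_mul_le Finset.univ ![b₁, b₂, b₃, b₄]
      ![k₁ - F, k₂ - F, k₃ - F, k₄ - F] (K := L * |v - u t| + η)
      (by simp [Fin.forall_fin_succ, d₁, d₂, d₃, d₄])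
  calc |v + h * (b₁ * k₁ + b₂ * k₂ + b₃ * k₃ + b₄ * k₄) - u (t + h)|
      = |(v - u t) + h * (b₁ * k₁ + b₂ * k₂ + b₃ * k₃ + b₄ * k₄ - F)
          - (u (t + h) - u t - h * F)| := by ring_nf
    _ ≤ |v - u t| + h * (β * (L * |v - u t| + η)) + τ / 2 * h := by
      refine (abs_sub _ _).trans (add_le_add ((abs_add_le _ _).trans (add_le_add le_rfl ?_))
        (hcons t ht hth))
      rw [abs_mul, abs_of_pos hh]; exact mul_le_mul_of_nonneg_left hΦ hh.le
    _ ≤ (1 + h * (β * L)) * |v - u t| + h * τ := by nlinarith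
end

theorem stmt_9_general (a b L : ℝ) (hab : a < b)
    (f : ℝ → ℝ → ℝ)
    (hfc : Continuous (fun p : ℝ × ℝ => f p.1 p.2))
    (hlip : ∀ t ∈ Set.Icc a b, ∀ u₁ u₂ : ℝ, |f t u₁ - f t u₂| ≤ L * |u₁ - u₂|)
    (u : ℝ → ℝ)
    (hu : ∀ t ∈ Set.Icc a b, HasDerivAt u (f t (u t)) t)
    (b₁ b₂ b₃ b₄ c₂ c₃ c₄ a₂₁ a₃₁ a₃₂ a₄₁ a₄₂ a₄₃ : ℝ)
    (hb : b₁ + b₂ + b₃ + b₄ = 1)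
    (M : ℝ) :
    ∀ ε > 0, ∃ N₀ : ℕ, ∀ N : ℕ, N₀ ≤ N → 1 ≤ N →
      ∀ e₂ e₃ e₄ : ℕ → ℝ,
      (∀ n < N, |e₂ n| ≤ M) → (∀ n < N, |e₃ n| ≤ M) → (∀ n < N, |e₄ n| ≤ M) →
      ∀ v k₁ k₂ k₃ k₄ : ℕ → ℝ, v 0 = u a →
      (∀ n < N, k₁ n = f (a + n * ((b - a) / N)) (v n)) →
      (∀ n < N, k₂ n = f (a + n * ((b - a) / N) + c₂ * ((b - a) / N))
          (v n * Real.exp (-(e₂ n) * (c₂ * ((b - a) / N)) ^ 2)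
            + ((b - a) / N) * (a₂₁ * k₁ n))) →
      (∀ n < N, k₃ n = f (a + n * ((b - a) / N) + c₃ * ((b - a) / N))
          (v n * Real.exp (-(e₃ n) * (c₃ * ((b - a) / N)) ^ 2)
            + ((b - a) / N) * (a₃₁ * k₁ n + a₃₂ * k₂ n))) →
      (∀ n < N, k₄ n = f (a + n * ((b - a) / N) + c₄ * ((b - a) / N))
          (v n * Real.exp (-(e₄ n) * (c₄ * ((b - a) / N)) ^ 2)
            + ((b - a) / N) * (a₄₁ * k₁ n + a₄₂ * k₂ n + a₄₃ * k₃ n))) →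
      (∀ n < N,
        v (n + 1) = v n + ((b - a) / N) *
          (b₁ * k₁ n + b₂ * k₂ n + b₃ * k₃ n + b₄ * k₄ n)) →
      ∀ n ≤ N, |v n - u (a + n * ((b - a) / N))| < ε := by
  intro ε hε
  set Λ := (|b₁| + |b₂| + |b₃| + |b₄|) * L
  have hΛ : 0 ≤ Λ := mul_nonneg (by positivity) (nonneg_of_abs_sub_le_mul hab.le hlip)
  obtain ⟨τ, hτ, hτε⟩ := exists_pos_mul_lt (lt_min hε one_pos) ((b - a) * exp (Λ * (b - a)))
  have hsteps := (tendsto_const_div_natCast_nhdsGT (sub_pos.2 hab)).eventually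
    (eventually_abs_rbf_rk_step_sub_le hab.le hfc hlip hu c₂ c₃ c₄ a₂₁ a₃₁ a₃₂ a₄₁ a₄₂ a₄₃ M hb hτ)
  obtain ⟨N₀, hN₀⟩ := eventually_atTop.1 hsteps
  refine ⟨N₀, fun N hN hN1 e₂ e₃ e₄ he₂ he₃ he₄ v k₁ k₂ k₃ k₄ hv0 hk₁ hk₂ hk₃ hk₄ hv => ?_⟩
  have hstep := hN₀ N hN
  set h := (b - a) / N
  have hNh : N * h = b - a := mul_div_cancel₀ _ (by positivity)
  have hgrid : ∀ n < N, a + n * h ∈ Icc a b ∧ a + n * h + h ≤ b := fun n hn => by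
    have : (n + 1 : ℝ) ≤ N := by exact_mod_cast hn
    refine ⟨⟨?_, ?_⟩, ?_⟩ <;> nlinarith [(by positivity : 0 ≤ h)]
  have herr := discrete_gronwall_bootstrap (d := fun n => |v n - u (a + n * h)|)
    (by positivity) hΛ hτ.le hNh.le (by simp [hv0]) fun n hn hd => by
      have := hstep (a + n * h) (hgrid n hn).1 (hgrid n hn).2 (v n) (e₂ n) (e₃ n) (e₄ n)
        (k₁ n) (k₂ n) (k₃ n) (k₄ n) (hd.trans ((min_le_right _ _).trans' hτε.le))
        (he₂ n hn) (he₃ n hn) (he₄ n hn) (hk₁ n hn) (hk₂ n hn) (hk₃ n hn) (hk₄ n hn)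
      rw [← hv n hn] at this
      simpa [Λ, add_mul, add_assoc] using this
  exact fun n hn => (herr n hn).trans_lt (hτε.trans_le (min_le_left _ _))

/-- Convergence of the four-stage RBF Runge–Kutta method with bounded shape
parameters, uniformly over all admissible choices of the shape parameters. -/
theorem stmt_9 (a b L : ℝ) (hab : a < b)
    (f : ℝ → ℝ → ℝ)
    (hfc : Continuous (fun p : ℝ × ℝ => f p.1 p.2))
    (hlip : ∀ t ∈ Set.Icc a b, ∀ u₁ u₂ : ℝ, |f t u₁ - f t u₂| ≤ L * |u₁ - u₂|)
    (u : ℝ → ℝ)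
    (hu : ∀ t ∈ Set.Icc a b, HasDerivAt u (f t (u t)) t)
    (b₁ b₂ b₃ b₄ c₂ c₃ c₄ a₂₁ a₃₁ a₃₂ a₄₁ a₄₂ a₄₃ : ℝ)
    (hb : b₁ + b₂ + b₃ + b₄ = 1)
    (ha21 : a₂₁ = c₂) (ha3 : a₃₁ + a₃₂ = c₃) (ha4 : a₄₁ + a₄₂ + a₄₃ = c₄)
    (hoc1 : b₂ * c₂ + b₃ * c₃ + b₄ * c₄ = 1 / 2)
    (hoc2 : b₂ * c₂ ^ 2 + b₃ * c₃ ^ 2 + b₄ * c₄ ^ 2 = 1 / 3)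
    (hoc3 : b₂ * c₂ ^ 3 + b₃ * c₃ ^ 3 + b₄ * c₄ ^ 3 = 1 / 4)
    (hoc4 : a₃₂ * b₃ * c₂ + a₄₂ * b₄ * c₂ + a₄₃ * b₄ * c₃ = 1 / 6)
    (hoc5 : a₃₂ * b₃ * c₂ * c₃ + a₄₂ * b₄ * c₂ * c₄ + a₄₃ * b₄ * c₃ * c₄ = 1 / 8)
    (hoc6 : a₃₂ * b₃ * c₂ ^ 2 + a₄₂ * b₄ * c₂ ^ 2 + a₄₃ * b₄ * c₃ ^ 2 = 1 / 12)
    (hoc7 : a₃₂ * a₄₃ * b₄ * c₂ = 1 / 24)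
    (M : ℝ) (hM : 0 ≤ M) :
    ∀ ε > 0, ∃ N₀ : ℕ, ∀ N : ℕ, N₀ ≤ N → 1 ≤ N →
      ∀ e₂ e₃ e₄ : ℕ → ℝ,
      (∀ n < N, |e₂ n| ≤ M) → (∀ n < N, |e₃ n| ≤ M) → (∀ n < N, |e₄ n| ≤ M) →
      ∀ v k₁ k₂ k₃ k₄ : ℕ → ℝ, v 0 = u a →
      (∀ n < N, k₁ n = f (a + n * ((b - a) / N)) (v n)) →
      (∀ n < N, k₂ n = f (a + n * ((b - a) / N) + c₂ * ((b - a) / N))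
          (v n * Real.exp (-(e₂ n) * (c₂ * ((b - a) / N)) ^ 2)
            + ((b - a) / N) * (a₂₁ * k₁ n))) →
      (∀ n < N, k₃ n = f (a + n * ((b - a) / N) + c₃ * ((b - a) / N))
          (v n * Real.exp (-(e₃ n) * (c₃ * ((b - a) / N)) ^ 2)
            + ((b - a) / N) * (a₃₁ * k₁ n + a₃₂ * k₂ n))) →
      (∀ n < N, k₄ n = f (a + n * ((b - a) / N) + c₄ * ((b - a) / N))
          (v n * Real.exp (-(e₄ n) * (c₄ * ((b - a) / N)) ^ 2)
            + ((b - a) / N) * (a₄₁ * k₁ n + a₄₂ * k₂ n + a₄₃ * k₃ n))) →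
      (∀ n < N,
        v (n + 1) = v n + ((b - a) / N) *
          (b₁ * k₁ n + b₂ * k₂ n + b₃ * k₃ n + b₄ * k₄ n)) →
      ∀ n ≤ N, |v n - u (a + n * ((b - a) / N))| < ε :=
  stmt_9_general a b L hab f hfc hlip u hu b₁ b₂ b₃ b₄ c₂ c₃ c₄ a₂₁ a₃₁ a₃₂ a₄₁ a₄₂ a₄₃ hb M
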